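/- Let C be a nonzero cyclic code of length n over F_q with gcd(n,q)=1, defining set S_C and distance d, and let F be the splitting field of x^n−1 over F_q. Then d ≥ min{ rk(M(v)) : v ∈ F^n, v ≠ 0, and v_i = 0 for every i ∈ S_C }, where rk(M(v)) is the rank over F of the circulant matrix associated to v. -/

import Mathlib

/-!
The discrete Fourier transform `v_i = c(α^i)` of a minimum-weight codeword `c` vanishes on the
defining set and is nonzero, because the Vandermonde matrix of the distinct powers of `α` is
invertible. Its circulant matrix factors as `V(α⁻¹) · diag(c) · V(α)` with Vandermonde matrices
`V`, because `α^n = 1` gives `α^((j - i) mod n) = α^(-i) α^j`; hence its rank is at most the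
number of nonzero entries of `c`, which is `d`.
-/

open Polynomial

/-- The circulant matrix associated to a vector `a`, whose first row is `a` and each
subsequent row is the cyclic right shift of the previous one: `M[i,j] = a_{(j-i) mod n}`. -/
def circulantOf {K : Type} [Field K] {n : ℕ} (a : Fin n → K) : Matrix (Fin n) (Fin n) K :=
  Matrix.of fun i j => a (j - i)

open Matrix Finset

section Circulant

variable {K : Type} [Field K] {n : ℕ}

def dft (α : K) (a : Fin n → K) : Fin n → K :=
  vandermonde (fun i : Fin n => α ^ (i : ℕ)) *ᵥ a

theorem pow_val_fin_add {α : K} (hα : α ^ n = 1) (i j : Fin n) :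
    α ^ ((i + j : Fin n) : ℕ) = α ^ (i : ℕ) * α ^ (j : ℕ) := by
  rw [Fin.val_add, ← pow_eq_pow_mod _ hα, pow_add]

theorem pow_val_fin_sub {α : K} (hα : α ^ n = 1) (i j : Fin n) :
    α ^ ((j - i : Fin n) : ℕ) = α⁻¹ ^ (i : ℕ) * α ^ (j : ℕ) := by
  have : NeZero n := ⟨(Fin.pos i).ne'⟩
  have hα0 : α ≠ 0 := by
    rintro rfl
    simp [zero_pow (NeZero.ne n)] at hα
  have h := pow_val_fin_add hα (j - i) i
  rw [sub_add_cancel] at h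
  rw [h, inv_pow, mul_comm, mul_inv_cancel_right₀ (pow_ne_zero _ hα0)]

theorem circulantOf_dft {α : K} (hα : α ^ n = 1) (a : Fin n → K) :
    circulantOf (dft α a) = vandermonde (fun i : Fin n => α⁻¹ ^ (i : ℕ)) * diagonal a *
      vandermonde (fun k : Fin n => α ^ (k : ℕ)) := by
  ext i j
  rw [mul_apply]
  simp only [circulantOf, dft, of_apply, mulVec, dotProduct, mul_diagonal, vandermonde_apply,
    pow_val_fin_sub hα]
  exact sum_congr rfl fun k _ => by ring

theorem rank_circulantOf_dft_le [DecidableEq K] {α : K} (hα : α ^ n = 1) (a : Fin n → K) :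
    (circulantOf (dft α a)).rank ≤ #{k | a k ≠ 0} := by
  calc (circulantOf (dft α a)).rank ≤ (diagonal a).rank := by
        rw [circulantOf_dft hα]
        exact (rank_mul_le_left _ _).trans (rank_mul_le_right _ _)
    _ = #{k | a k ≠ 0} := by rw [rank_diagonal, Fintype.card_subtype]

theorem dft_ne_zero {α : K} (hα : IsPrimitiveRoot α n) {a : Fin n → K} (ha : a ≠ 0) :
    dft α a ≠ 0 := by
  have hinj : Function.Injective (vandermonde (fun i : Fin n => α ^ (i : ℕ))).mulVec := by
    rw [mulVec_injective_iff_isUnit, isUnit_iff_isUnit_det, isUnit_iff_ne_zero,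
      det_vandermonde_ne_zero_iff]
    exact fun i j h => Fin.ext (hα.pow_inj i.2 j.2 h)
  exact fun h => ha (hinj (h.trans (mulVec_zero _).symm))

theorem dft_algebraMap_eq_aeval {R : Type*} [CommSemiring R] [Algebra R K] (α : K) (c : Fin n → R)
    (i : Fin n) :
    dft α (fun j => algebraMap R K (c j)) i =
      aeval (α ^ (i : ℕ)) (∑ j : Fin n, C (c j) * X ^ (j : ℕ)) := by
  simp only [dft, mulVec, dotProduct, vandermonde_apply, map_sum, map_mul, aeval_C, aeval_X_pow]
  exact sum_congr rfl fun _ _ => mul_comm _ _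

end Circulant

theorem schaub_field_level_general
    (n : ℕ)
    (Fq F : Type) [Field Fq] [DecidableEq Fq]
    [Field F] [Algebra Fq F]
    (α : F) (hα : IsPrimitiveRoot α n)
    (g : Polynomial Fq)
    (C : Set (Fin n → Fq))
    (hC : C = { c | g ∣ ∑ i : Fin n, Polynomial.C (c i) * X ^ (i : ℕ) })
    (SC : Set ℕ)
    (hSC : SC = { i | i < n ∧ Polynomial.aeval (α ^ i) g = 0 })
    (wt : (Fin n → Fq) → ℕ)
    (hwt : ∀ c, wt c = (Finset.univ.filter fun i => c i ≠ 0).card)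
    (d : ℕ) (hd : IsLeast { w | ∃ c ∈ C, c ≠ 0 ∧ wt c = w } d) :
    sInf { k | ∃ v : Fin n → F, v ≠ 0 ∧ (∀ i : Fin n, (i : ℕ) ∈ SC → v i = 0) ∧
      (circulantOf v).rank = k } ≤ d := by
  classical
  subst hC hSC
  obtain ⟨c, ⟨p, hp⟩, hc0, rfl⟩ := hd.1
  set a : Fin n → F := fun j => algebraMap Fq F (c j)
  have ha0 : a ≠ 0 := by simpa [a, funext_iff] using hc0
  have hvanish : ∀ i : Fin n, aeval (α ^ (i : ℕ)) g = 0 → dft α a i = 0 := fun i hi => by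
    rw [dft_algebraMap_eq_aeval, hp, map_mul, hi, zero_mul]
  have hweight : #{k | a k ≠ 0} = wt c := by simp [a, hwt]
  refine (Nat.sInf_le ?_).trans ((rank_circulantOf_dft_le hα.pow_eq_one a).trans_eq hweight)
  exact ⟨dft α a, dft_ne_zero hα ha0, fun i hi => hvanish i hi.2, rfl⟩

/-- The Schaub-type bound at the field level: the distance `d` of a nonzero cyclic code is
at least the minimum rank of the circulant matrix of a nonzero vector of `F^n` vanishing
on the defining set `SC`. -/
theorem schaub_field_level
    (q n : ℕ) (hq : IsPrimePow q) (hn : 1 ≤ n) (hgcd : Nat.gcd n q = 1)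
    (Fq F : Type) [Field Fq] [Fintype Fq] [DecidableEq Fq]
    (hcard : Fintype.card Fq = q)
    [Field F] [Algebra Fq F]
    (hsplit : IsSplittingField Fq F (X ^ n - 1 : Polynomial Fq))
    (α : F) (hα : IsPrimitiveRoot α n)
    (g : Polynomial Fq) (hmonic : g.Monic) (hdvd : g ∣ X ^ n - 1)
    (C : Set (Fin n → Fq))
    (hC : C = { c | g ∣ ∑ i : Fin n, Polynomial.C (c i) * X ^ (i : ℕ) })
    (SC : Set ℕ)
    (hSC : SC = { i | i < n ∧ Polynomial.aeval (α ^ i) g = 0 })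
    (wt : (Fin n → Fq) → ℕ)
    (hwt : ∀ c, wt c = (Finset.univ.filter fun i => c i ≠ 0).card)
    (d : ℕ) (hd : IsLeast { w | ∃ c ∈ C, c ≠ 0 ∧ wt c = w } d) :
    sInf { k | ∃ v : Fin n → F, v ≠ 0 ∧ (∀ i : Fin n, (i : ℕ) ∈ SC → v i = 0) ∧
      (circulantOf v).rank = k } ≤ d :=
  schaub_field_level_general n Fq F α hα g C hC SC hSC wt hwt d hd
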